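/- arXiv:1708.03106 — 4 statements merged into one kernel-verified Lean document; each statement's English description precedes it below -/
import Mathlib

section
/- Let λ, μ be partitions of lengths r1, r2, and set n_1 = λ_1 + r1 − 1 if r1 ≥ 1 (n_1 = 0 if λ is empty) and m_1 = μ_1 + r2 − 1 if r2 ≥ 1 (m_1 = 0 if μ is empty). Let α ∈ ℝ satisfy: α ∉ {−1, −2, …, −max(n_1, m_1)}, and α ≠ −n_i − m_j − 1 for all i = 1,…,r1 and j = 1,…,r2. Then Ω_{λ,μ}^{(α)}(0) ≠ 0. -/
open scoped BigOperators

/-- The Laguerre polynomial `L_n^{(α)}` as a function on `ℝ`; it is `0` for `n < 0`. -/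
noncomputable def laguerre (α : ℝ) (n : ℤ) (x : ℝ) : ℝ :=
  if n < 0 then 0 else
    ∑ k ∈ Finset.range (n.toNat + 1),
      ((-1 : ℝ) ^ k / (Nat.factorial k : ℝ)) *
        ((∏ i ∈ Finset.Icc (k + 1) n.toNat, (α + (i : ℝ))) / (Nat.factorial (n.toNat - k) : ℝ)) *
        x ^ k

/-- The Wronskian `Wr[f_1, …, f_r](x) = det (f_i^{(j-1)}(x))`. -/
noncomputable def Wr {r : ℕ} (f : Fin r → ℝ → ℝ) (x : ℝ) : ℝ :=
  Matrix.det (Matrix.of fun i j : Fin r => iteratedDeriv (j : ℕ) (f i) x)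

/-- A partition: a weakly decreasing finite sequence of positive integers,
encoded by its length `len` and a function `part` giving the parts (0-indexed). -/
structure PartitionSeq where
  len : ℕ
  part : ℕ → ℕ
  pos : ∀ i, i < len → 1 ≤ part i
  antitone : ∀ i j, i ≤ j → j < len → part j ≤ part i

/-- The size `|λ|` of a partition. -/
def PartitionSeq.size (p : PartitionSeq) : ℕ := ∑ i ∈ Finset.range p.len, p.part i

/-- The degree sequence `n_j = λ_j + r1 − j` (0-indexed: `n_i = λ_{i+1} + r1 − 1 − i`). -/
def PartitionSeq.deg (p : PartitionSeq) (i : ℕ) : ℕ := p.part i + (p.len - 1 - i)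

/-- The generalized Laguerre polynomial `Ω_{λ,μ}^{(α)}` as a function on `ℝ`. -/
noncomputable def genLagFun (α : ℝ) (lam mu : PartitionSeq) (x : ℝ) : ℝ :=
  Real.exp (-(mu.len : ℝ) * x) *
    Wr (fun i : Fin (lam.len + mu.len) => fun y =>
      if (i : ℕ) < lam.len then laguerre α (lam.deg (i : ℕ)) y
      else Real.exp y * laguerre α (mu.deg ((i : ℕ) - lam.len)) (-y)) x

/-- The degree sequence `ℕ_{λ,μ}`. -/
def degSeq (lam mu : PartitionSeq) : Set ℕ :=
  {n : ℕ | (lam.size : ℤ) + mu.size - lam.len ≤ (n : ℤ) ∧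
    ∀ j, j < lam.len → (n : ℤ) - lam.size - mu.size ≠ (lam.part j : ℤ) - (j + 1)}

/-- The exceptional Laguerre polynomial `L_{λ,μ,n}^{(α)}` as a function on `ℝ`. -/
noncomputable def excLagFun (α : ℝ) (lam mu : PartitionSeq) (n : ℕ) (x : ℝ) : ℝ :=
  Real.exp (-(mu.len : ℝ) * x) *
    Wr (fun i : Fin (lam.len + mu.len + 1) => fun y =>
      if (i : ℕ) < lam.len then laguerre α (lam.deg (i : ℕ)) y
      else if (i : ℕ) < lam.len + mu.len then
        Real.exp y * laguerre α (mu.deg ((i : ℕ) - lam.len)) (-y)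
      else laguerre α ((n : ℤ) - lam.size - mu.size + lam.len) y) x

/-!
At `x = 0` every entry of the Wronskian matrix is explicit: `L_n^{(α)}` differentiates to
`-L_{n-1}^{(α+1)}` and `e^x L_m^{(α)}(-x)` to `e^x L_m^{(α+1)}(-x)`, so each derivative at `0` is a
value `L_k^{(β)}(0) = (β+1)_k / k!`. After multiplying column `c` by `(α+1)_c`, row `i` becomes
`e_i · (x_i)_c` with `e_i = (α+1)_d / d!` (`d` the degree of the row) and node `x_i = -n_i` for a
row of `λ`, `x_i = α + m_j + 1` for a row of `μ`. The determinant is then `∏ e_i` times the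
Vandermonde determinant of the nodes, and the hypotheses on `α` say precisely that no `e_i`
vanishes and that the nodes are distinct.
-/

open Polynomial Finset
open scoped Nat

section Pochhammer

variable {S : Type*} [CommSemiring S]

theorem ascPochhammer_eval_eq_prod_range (n : ℕ) (r : S) :
    (ascPochhammer S n).eval r = ∏ j ∈ range n, (r + j) := by
  induction n with
  | zero => simp
  | succ n ih => rw [ascPochhammer_succ_eval, ih, prod_range_succ]

theorem ascPochhammer_eval_add (m n : ℕ) (r : S) :
    (ascPochhammer S (m + n)).eval r =
      (ascPochhammer S m).eval r * (ascPochhammer S n).eval (r + m) := by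
  rw [← ascPochhammer_mul, eval_mul, eval_comp]
  simp

theorem ascPochhammer_succ_eval_left (n : ℕ) (r : S) :
    (ascPochhammer S (n + 1)).eval r = r * (ascPochhammer S n).eval (r + 1) := by
  rw [add_comm, ascPochhammer_eval_add, ascPochhammer_one, eval_X, Nat.cast_one]

theorem prod_Icc_add_eq_ascPochhammer_eval (r : S) (k n : ℕ) :
    ∏ i ∈ Icc (k + 1) n, (r + i) = (ascPochhammer S (n - k)).eval (r + k + 1) := by
  rw [ascPochhammer_eval_eq_prod_range, ← Ico_add_one_right_eq_Icc, prod_Ico_eq_prod_range,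
    Nat.add_sub_add_right]
  refine prod_congr rfl fun j _ => ?_
  push_cast
  ring

end Pochhammer

theorem Matrix.det_ne_zero_of_mul_eq_ascPochhammer_eval {K : Type*} [CommRing K] [IsDomain K]
    {r : ℕ} (A : Matrix (Fin r) (Fin r) K) (w e x : Fin r → K) (he : ∀ i, e i ≠ 0)
    (hx : Function.Injective x) (hA : ∀ i j, w j * A i j = e i * (ascPochhammer K j).eval (x i)) :
    A.det ≠ 0 := by
  have hV : (Matrix.of fun i j : Fin r => (ascPochhammer K j).eval (x i)).det ≠ 0 := by
    rw [← Matrix.det_eval_matrixOfPolynomials_eq_det_vandermonde x _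
      (fun j => ascPochhammer_natDegree K j) (fun j => monic_ascPochhammer K j)]
    exact Matrix.det_vandermonde_ne_zero_iff.2 hx
  have hscale : (∏ j, w j) * A.det =
      (∏ i, e i) * (Matrix.of fun i j : Fin r => (ascPochhammer K j).eval (x i)).det := by
    rw [← Matrix.det_mul_row, ← Matrix.det_mul_column]
    exact congrArg Matrix.det (Matrix.ext hA)
  intro hA0
  rw [hA0, mul_zero] at hscale
  exact mul_ne_zero (prod_ne_zero_iff.2 fun i _ => he i) hV hscale.symm

theorem ascPochhammer_eval_add_one_ne_zero {K : Type*} [CommRing K] [IsDomain K] {α : K} {d : ℕ}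
    (h : ∀ k : ℕ, 1 ≤ k → k ≤ d → α ≠ -k) : (ascPochhammer K d).eval (α + 1) ≠ 0 := by
  rw [Ne, ascPochhammer_eval_eq_zero_iff]
  rintro ⟨k, hkd, hk⟩
  exact h (k + 1) (by omega) hkd (by push_cast; linear_combination hk)

-- `∏_{i=k+1}^{n} (α+i)` written as `(α+k+1)_{n-k}`, so that shifting `α` or `k` only moves the
-- evaluation point.
noncomputable def laguerreCoeff (α : ℝ) (n k : ℕ) : ℝ :=
  (-1) ^ k / k ! * ((ascPochhammer ℝ (n - k)).eval (α + k + 1) / (n - k) !)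

theorem laguerre_natCast (α : ℝ) (n : ℕ) (x : ℝ) :
    laguerre α n x = ∑ k ∈ range (n + 1), laguerreCoeff α n k * x ^ k := by
  simp only [laguerre, Int.natCast_nonneg, not_lt.2, if_false, Int.toNat_natCast, laguerreCoeff,
    prod_Icc_add_eq_ascPochhammer_eval]

theorem laguerre_of_neg (α : ℝ) {n : ℤ} (hn : n < 0) : laguerre α n = 0 := by
  ext x
  simp [laguerre, hn]

theorem laguerre_zero (α x : ℝ) : laguerre α 0 x = 1 := by
  simp [laguerre]

theorem laguerre_natCast_zero (α : ℝ) (n : ℕ) :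
    laguerre α n 0 = (ascPochhammer ℝ n).eval (α + 1) / n ! := by
  rw [laguerre_natCast, sum_range_succ']
  simp [laguerreCoeff]

theorem laguerreCoeff_succ_mul (α : ℝ) (n k : ℕ) :
    laguerreCoeff α (n + 1) (k + 1) * (k + 1) = -laguerreCoeff (α + 1) n k := by
  simp only [laguerreCoeff, Nat.add_sub_add_right, Nat.factorial_succ]
  push_cast
  rw [show α + (k + 1 : ℝ) + 1 = α + 1 + k + 1 by ring]
  field_simp
  ring

theorem laguerreCoeff_add_one (α : ℝ) {n k : ℕ} (hk : k ≤ n) :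
    laguerreCoeff (α + 1) (n + 1) k = laguerreCoeff α (n + 1) k + laguerreCoeff (α + 1) n k := by
  obtain ⟨d, rfl⟩ := Nat.exists_eq_add_of_le hk
  simp only [laguerreCoeff, show k + d + 1 - k = d + 1 by omega, Nat.add_sub_cancel_left,
    Nat.factorial_succ]
  rw [ascPochhammer_succ_eval _ (α + 1 + k + 1), ascPochhammer_succ_eval_left _ (α + k + 1),
    show α + k + 1 + 1 = α + 1 + k + 1 by ring]
  push_cast
  field_simp
  ring

theorem hasDerivAt_laguerre_natCast_succ (α : ℝ) (n : ℕ) (x : ℝ) :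
    HasDerivAt (laguerre α (n + 1 : ℕ)) (-laguerre (α + 1) n x) x := by
  have hsum : HasDerivAt (fun y => ∑ k ∈ range (n + 2), laguerreCoeff α (n + 1) k * y ^ k)
      (∑ k ∈ range (n + 2), laguerreCoeff α (n + 1) k * (k * x ^ (k - 1))) x :=
    HasDerivAt.fun_sum fun k _ => (hasDerivAt_pow k x).const_mul _
  convert hsum using 1
  · exact funext (laguerre_natCast α (n + 1))
  · rw [laguerre_natCast, sum_range_succ' _ (n + 1), ← sum_neg_distrib]
    simp only [Nat.cast_zero, zero_mul, mul_zero, add_zero, Nat.cast_add, Nat.cast_one,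
      Nat.add_sub_cancel]
    refine sum_congr rfl fun k _ => ?_
    rw [← neg_mul, ← laguerreCoeff_succ_mul]
    ring

theorem hasDerivAt_laguerre (α : ℝ) (n : ℤ) (x : ℝ) :
    HasDerivAt (laguerre α n) (-laguerre (α + 1) (n - 1) x) x := by
  rcases lt_trichotomy n 0 with hn | rfl | hn
  · rw [laguerre_of_neg _ hn, laguerre_of_neg _ (by omega)]
    simp
  · rw [laguerre_of_neg _ (by omega : (0 : ℤ) - 1 < 0)]
    simpa [funext (laguerre_zero α)] using hasDerivAt_const x (1 : ℝ)
  · obtain ⟨n, rfl⟩ := Int.eq_succ_of_zero_lt hn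
    simpa using hasDerivAt_laguerre_natCast_succ α n x

theorem laguerre_add_one (α : ℝ) (n : ℤ) (x : ℝ) :
    laguerre (α + 1) n x = laguerre α n x + laguerre (α + 1) (n - 1) x := by
  rcases lt_trichotomy n 0 with hn | rfl | hn
  · simp [laguerre_of_neg _ hn, laguerre_of_neg _ (by omega : n - 1 < 0)]
  · simp [laguerre_zero, laguerre_of_neg]
  · obtain ⟨n, rfl⟩ := Int.eq_succ_of_zero_lt hn
    rw [add_sub_cancel_right, ← Nat.cast_succ, laguerre_natCast, laguerre_natCast,
      laguerre_natCast, sum_range_succ, sum_range_succ _ (n + 1), add_right_comm, ← sum_add_distrib]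
    congr 1
    · exact sum_congr rfl fun k hk => by
        rw [laguerreCoeff_add_one α (Nat.lt_succ_iff.1 (mem_range.1 hk)), add_mul]
    · simp [laguerreCoeff]

theorem deriv_laguerre (α : ℝ) (n : ℤ) : deriv (laguerre α n) = -laguerre (α + 1) (n - 1) :=
  funext fun x => (hasDerivAt_laguerre α n x).deriv

theorem iteratedDeriv_laguerre (α : ℝ) (n : ℤ) (c : ℕ) (x : ℝ) :
    iteratedDeriv c (laguerre α n) x = (-1) ^ c * laguerre (α + c) (n - c) x := by
  induction c generalizing α n with
  | zero => simp
  | succ c ih =>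
    rw [iteratedDeriv_succ', deriv_laguerre, iteratedDeriv_neg, ih, pow_succ]
    push_cast
    ring_nf

theorem deriv_exp_mul_laguerre_neg (α : ℝ) (m : ℤ) :
    deriv (fun y => Real.exp y * laguerre α m (-y)) =
      fun y => Real.exp y * laguerre (α + 1) m (-y) := by
  funext y
  have hL : HasDerivAt (fun y => laguerre α m (-y)) (laguerre (α + 1) (m - 1) (-y)) y := by
    simpa [Function.comp_def] using (hasDerivAt_laguerre α m (-y)).comp y (hasDerivAt_neg y)
  rw [((Real.hasDerivAt_exp y).fun_mul hL).deriv, laguerre_add_one α m (-y)]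
  ring

theorem iteratedDeriv_exp_mul_laguerre_neg (α : ℝ) (m : ℤ) (c : ℕ) :
    iteratedDeriv c (fun y => Real.exp y * laguerre α m (-y)) =
      fun y => Real.exp y * laguerre (α + c) m (-y) := by
  induction c generalizing α with
  | zero => simp
  | succ c ih =>
    rw [iteratedDeriv_succ', deriv_exp_mul_laguerre_neg, ih]
    push_cast
    ring_nf

theorem ascPochhammer_mul_iteratedDeriv_laguerre_zero (α : ℝ) (n c : ℕ) :
    (ascPochhammer ℝ c).eval (α + 1) * iteratedDeriv c (laguerre α n) 0 =
      (ascPochhammer ℝ n).eval (α + 1) / n ! * (ascPochhammer ℝ c).eval (-(n : ℝ)) := by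
  rw [iteratedDeriv_laguerre]
  rcases lt_or_ge n c with hnc | hcn
  · rw [laguerre_of_neg _ (by omega), ascPochhammer_eval_neg_coe_nat_of_lt hnc]
    simp
  · obtain ⟨d, rfl⟩ := Nat.exists_eq_add_of_le hcn
    have hfac : ((c + d) ! : ℝ) = d ! * (c + d).descFactorial c := by
      rw [← Nat.factorial_mul_descFactorial hcn, Nat.add_sub_cancel_left, Nat.cast_mul]
    rw [show ((c + d : ℕ) : ℤ) - c = d by push_cast; ring, laguerre_natCast_zero,
      ascPochhammer_eval_add, ascPochhammer_eval_neg_eq_descPochhammer,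
      descPochhammer_eval_eq_descFactorial, hfac, add_right_comm]
    field_simp

theorem ascPochhammer_mul_iteratedDeriv_exp_mul_laguerre_neg_zero (α : ℝ) (m c : ℕ) :
    (ascPochhammer ℝ c).eval (α + 1) *
        iteratedDeriv c (fun y => Real.exp y * laguerre α m (-y)) 0 =
      (ascPochhammer ℝ m).eval (α + 1) / m ! * (ascPochhammer ℝ c).eval (α + m + 1) := by
  simp only [iteratedDeriv_exp_mul_laguerre_neg, neg_zero, Real.exp_zero, one_mul,
    laguerre_natCast_zero]
  rw [add_right_comm, mul_div_assoc', ← ascPochhammer_eval_add, add_comm c,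
    ascPochhammer_eval_add, add_right_comm, mul_div_right_comm]

namespace PartitionSeq

theorem deg_le_deg_zero (p : PartitionSeq) {i : ℕ} (hi : i < p.len) : p.deg i ≤ p.deg 0 := by
  have := p.antitone 0 i i.zero_le hi
  unfold deg
  omega

theorem deg_strictAntiOn (p : PartitionSeq) : StrictAntiOn p.deg (Set.Iio p.len) := by
  intro i _ j (hj : j < p.len) hij
  have := p.antitone i j hij.le hj
  unfold deg
  omega

end PartitionSeq

def genLagDeg (lam mu : PartitionSeq) (i : ℕ) : ℕ :=
  if i < lam.len then lam.deg i else mu.deg (i - lam.len)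

noncomputable def genLagNode (α : ℝ) (lam mu : PartitionSeq) (i : ℕ) : ℝ :=
  if i < lam.len then -(lam.deg i : ℝ) else α + mu.deg (i - lam.len) + 1

theorem genLagDeg_le (lam mu : PartitionSeq) {i : ℕ} (hi : i < lam.len + mu.len) :
    genLagDeg lam mu i ≤
      max (if lam.len = 0 then 0 else lam.deg 0) (if mu.len = 0 then 0 else mu.deg 0) := by
  by_cases hlam : i < lam.len
  · rw [genLagDeg, if_pos hlam]
    exact le_max_of_le_left (by rw [if_neg (by omega)]; exact lam.deg_le_deg_zero hlam)
  · rw [genLagDeg, if_neg hlam]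
    exact le_max_of_le_right (by rw [if_neg (by omega)]; exact mu.deg_le_deg_zero (by omega))

theorem genLagNode_injOn (α : ℝ) (lam mu : PartitionSeq)
    (h : ∀ i, i < lam.len → ∀ j, j < mu.len → α ≠ -(lam.deg i : ℝ) - (mu.deg j : ℝ) - 1) :
    Set.InjOn (genLagNode α lam mu) (Set.Iio (lam.len + mu.len)) := by
  intro i (hi : i < _) j (hj : j < _) hij
  unfold genLagNode at hij
  split_ifs at hij with hi_lam hj_lam hj_lam
  · exact lam.deg_strictAntiOn.injOn hi_lam hj_lam (by exact_mod_cast neg_inj.1 hij)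
  · exact absurd (by linear_combination -hij) (h i hi_lam (j - lam.len) (by omega))
  · exact absurd (by linear_combination hij) (h j hj_lam (i - lam.len) (by omega))
  · have := mu.deg_strictAntiOn.injOn (x₁ := i - lam.len) (x₂ := j - lam.len) (by simp; omega)
      (by simp; omega) (by exact_mod_cast add_left_cancel (add_right_cancel hij))
    omega

theorem ascPochhammer_mul_iteratedDeriv_genLag_row_zero (α : ℝ) (lam mu : PartitionSeq)
    (i c : ℕ) :
    (ascPochhammer ℝ c).eval (α + 1) *
        iteratedDeriv c (fun y => if i < lam.len then laguerre α (lam.deg i) y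
          else Real.exp y * laguerre α (mu.deg (i - lam.len)) (-y)) 0 =
      (ascPochhammer ℝ (genLagDeg lam mu i)).eval (α + 1) / (genLagDeg lam mu i) ! *
        (ascPochhammer ℝ c).eval (genLagNode α lam mu i) := by
  unfold genLagDeg genLagNode
  split_ifs
  · exact ascPochhammer_mul_iteratedDeriv_laguerre_zero α _ c
  · exact ascPochhammer_mul_iteratedDeriv_exp_mul_laguerre_neg_zero α _ c

/-- **Nonvanishing at the origin.** With `n₁ = λ₁ + r₁ − 1` (or `0` if `λ = ∅`) and
`m₁ = μ₁ + r₂ − 1` (or `0` if `μ = ∅`), if `α ∉ {−1, …, −max(n₁,m₁)}` and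
`α ≠ −n_i − m_j − 1` for all `i, j`, then `Ω_{λ,μ}^{(α)}(0) ≠ 0`. -/
theorem genLag_nonzero_at_origin (α : ℝ) (lam mu : PartitionSeq)
    (h1 : ∀ k : ℕ, 1 ≤ k →
      k ≤ max (if lam.len = 0 then 0 else lam.deg 0) (if mu.len = 0 then 0 else mu.deg 0) →
      α ≠ -(k : ℝ))
    (h2 : ∀ i, i < lam.len → ∀ j, j < mu.len →
      α ≠ -(lam.deg i : ℝ) - (mu.deg j : ℝ) - 1) :
    genLagFun α lam mu 0 ≠ 0 := by
  rw [genLagFun, Wr, mul_zero, Real.exp_zero, one_mul]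
  refine Matrix.det_ne_zero_of_mul_eq_ascPochhammer_eval _
    (fun j => (ascPochhammer ℝ j).eval (α + 1))
    (fun i => (ascPochhammer ℝ (genLagDeg lam mu i)).eval (α + 1) / (genLagDeg lam mu i) !)
    (fun i => genLagNode α lam mu i) (fun i => ?_) (fun i j hij => ?_) (fun i j => ?_)
  · exact div_ne_zero (ascPochhammer_eval_add_one_ne_zero fun k hk hkd =>
      h1 k hk (hkd.trans (genLagDeg_le lam mu i.isLt))) (by positivity)
  · exact Fin.ext (genLagNode_injOn α lam mu h2 i.isLt j.isLt hij)
  · exact ascPochhammer_mul_iteratedDeriv_genLag_row_zero α lam mu i j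
end

section
/- For every α ∈ ℝ, every pair of partitions λ, μ of lengths r1, r2, and every x, one has Ω_{λ,μ}^{(α)}(x) = (−1)^{r1(r1−1)/2 + r2(r2−1)/2} · Ω_{μ,λ}^{(α)}(−x). -/
open scoped BigOperators

/-! The substitution `f(y) ↦ e^y f(-y)` is an involution exchanging `L_n^{(α)}(y)` and
`e^y L_n^{(α)}(-y)`, so it maps the family defining `Ω_{μ,λ}` onto the family defining
`Ω_{λ,μ}` with its two blocks swapped. Under this substitution the Wronskian picks up `e^{rx}`
from the common factor (by Leibniz' rule the derivative matrix is multiplied by a triangular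
matrix with diagonal `e^x`) and `(-1)^{r(r-1)/2}` from `y ↦ -y` (column `j` is scaled by
`(-1)^j`); swapping the blocks costs `(-1)^{r₁r₂}`, and
`r₁r₂ + r(r-1)/2 ≡ r₁(r₁-1)/2 + r₂(r₂-1)/2 (mod 2)`. -/

open Finset Equiv Matrix
open scoped ContDiff

theorem contDiff_laguerre (α : ℝ) (n : ℤ) : ContDiff ℝ ∞ (laguerre α n) := by
  unfold laguerre
  split_ifs <;> fun_prop

section Wronskian

variable {r : ℕ}

theorem Wr_comp_perm (f : Fin r → ℝ → ℝ) (σ : Perm (Fin r)) (x : ℝ) :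
    Wr (f ∘ σ) x = Perm.sign σ * Wr f x :=
  det_permute σ (of fun i j : Fin r => iteratedDeriv j (f i) x)

theorem Wr_comp_finCongr {m : ℕ} (h : m = r) (f : Fin r → ℝ → ℝ) (x : ℝ) :
    Wr (f ∘ finCongr h) x = Wr f x := by
  subst h
  rfl

theorem Wr_mul_left {g : ℝ → ℝ} (hg : ContDiff ℝ ∞ g) {f : Fin r → ℝ → ℝ}
    (hf : ∀ i, ContDiff ℝ ∞ (f i)) (x : ℝ) :
    Wr (fun i => g * f i) x = g x ^ r * Wr f x := by
  let B : Matrix (Fin r) (Fin r) ℝ :=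
    of fun j k => ((k : ℕ).choose j : ℝ) * iteratedDeriv (k - j) g x
  have hB : B.BlockTriangular id := fun j k hkj => by
    simp [B, Nat.choose_eq_zero_of_lt (show (k : ℕ) < j from hkj)]
  have hprod : (of fun i k : Fin r => iteratedDeriv k (g * f i) x) =
      (of fun i j : Fin r => iteratedDeriv j (f i) x) * B := by
    ext i k
    rw [of_apply, mul_comm g,
      iteratedDeriv_mul ((hf i).contDiffAt.of_le (by exact_mod_cast le_top))
        (hg.contDiffAt.of_le (by exact_mod_cast le_top)), mul_apply]
    calc _ = ∑ j ∈ range r,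
          iteratedDeriv j (f i) x * (((k : ℕ).choose j : ℝ) * iteratedDeriv (k - j) g x) := by
          rw [← sum_subset (range_subset_range.2 k.isLt) fun j _ hj => ?_]
          · exact sum_congr rfl fun j _ => by ring
          · rw [Nat.choose_eq_zero_of_lt (by simpa using hj), Nat.cast_zero, zero_mul, mul_zero]
      _ = _ := (Fin.sum_univ_eq_sum_range (fun j => iteratedDeriv j (f i) x *
          (((k : ℕ).choose j : ℝ) * iteratedDeriv (k - j) g x)) r).symm
  rw [Wr, hprod, det_mul, det_of_isUpperTriangular hB]
  simp [B, Wr, mul_comm]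

theorem Wr_comp_neg (f : Fin r → ℝ → ℝ) (x : ℝ) :
    Wr (fun i y => f i (-y)) x = (-1) ^ (r * (r - 1) / 2) * Wr f (-x) := by
  have hcol : (of fun i j : Fin r => iteratedDeriv j (fun y => f i (-y)) x) =
      of fun i j : Fin r =>
        (-1) ^ (j : ℕ) * (of fun i j : Fin r => iteratedDeriv j (f i) (-x)) i j := by
    ext i j
    simp [iteratedDeriv_comp_neg]
  rw [Wr, hcol, det_mul_row, prod_pow_eq_pow_sum, Fin.sum_univ_eq_sum_range (fun j => j) r,
    sum_range_id]
  rfl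

theorem Wr_exp_mul_comp_neg {f : Fin r → ℝ → ℝ} (hf : ∀ i, ContDiff ℝ ∞ (f i)) (x : ℝ) :
    Wr (fun i y => Real.exp y * f i (-y)) x =
      Real.exp x ^ r * ((-1) ^ (r * (r - 1) / 2) * Wr f (-x)) := by
  rw [← Wr_comp_neg]
  exact Wr_mul_left Real.contDiff_exp (fun i => (hf i).comp contDiff_neg) x

end Wronskian

theorem val_finRotate_pow_apply {n : ℕ} (k : ℕ) (i : Fin n) :
    ((finRotate n ^ k) i : ℕ) = (i + k) % n := by
  rcases n with _ | n
  · exact i.elim0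
  induction k with
  | zero => simp [Nat.mod_eq_of_lt i.isLt]
  | succ k ih =>
    rw [pow_succ', Perm.mul_apply, finRotate_apply, Fin.val_add, ih, Fin.val_one',
      ← Nat.add_mod, ← add_assoc]

theorem Wr_append_comm {a b : ℕ} (A : Fin a → ℝ → ℝ) (B : Fin b → ℝ → ℝ) (x : ℝ) :
    Wr (Fin.append A B) x = (-1) ^ (a * b) * Wr (Fin.append B A) x := by
  have hrot : Fin.append A B =
      (Fin.append B A ∘ finCongr (add_comm a b)) ∘ (finRotate (a + b) ^ b) := by
    funext i
    refine Fin.addCases (fun j => ?_) (fun j => ?_) i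
    · have : finCongr (add_comm a b) ((finRotate (a + b) ^ b) (Fin.castAdd b j)) =
          Fin.natAdd b j := by
        ext
        simp [val_finRotate_pow_apply, Nat.mod_eq_of_lt (show b + j < a + b by omega), add_comm]
      simp [this]
    · have : finCongr (add_comm a b) ((finRotate (a + b) ^ b) (Fin.natAdd a j)) =
          Fin.castAdd a j := by
        ext
        simp [val_finRotate_pow_apply, show a + j + b = j + (a + b) by omega,
          Nat.mod_eq_of_lt (show (j : ℕ) < a + b by omega)]
      simp [this]
  have hsign : (-1 : ℝ) ^ ((a + b - 1) * b) = (-1) ^ (a * b) := by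
    rcases b with _ | b
    · simp
    · rw [show a + (b + 1) - 1 = a + b by omega, add_mul, pow_add,
        (Nat.even_mul_succ_self b).neg_one_pow, mul_one]
  rw [hrot, Wr_comp_perm, Wr_comp_finCongr, map_pow, sign_finRotate, ← pow_mul]
  push_cast
  rw [hsign]

theorem neg_one_pow_mul_triangle_add {R : Type*} [Monoid R] [HasDistribNeg R] (a b : ℕ) :
    (-1 : R) ^ (a * b) * (-1) ^ ((b + a) * (b + a - 1) / 2) =
      (-1) ^ (a * (a - 1) / 2 + b * (b - 1) / 2) := by
  simp_rw [← Nat.choose_two_right]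
  have hsplit : (b + a).choose 2 = a * b + (a.choose 2 + b.choose 2) := by
    have : ((b + a).choose 2 : ℚ) = a * b + (a.choose 2 + b.choose 2) := by
      simp only [Nat.cast_choose_two]
      push_cast
      ring
    exact_mod_cast this
  rw [hsplit, ← pow_add, ← add_assoc, ← two_mul, pow_add, pow_mul, neg_one_sq, one_pow, one_mul]

namespace PartitionSeq

noncomputable def laguerreBlock (α : ℝ) (p : PartitionSeq) (j : Fin p.len) (y : ℝ) : ℝ :=
  laguerre α (p.deg j) y

noncomputable def expLaguerreBlock (α : ℝ) (p : PartitionSeq) (j : Fin p.len) (y : ℝ) : ℝ :=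
  Real.exp y * laguerre α (p.deg j) (-y)

end PartitionSeq

open PartitionSeq

theorem genLagFun_eq_exp_mul_Wr_append (α : ℝ) (lam mu : PartitionSeq) (x : ℝ) :
    genLagFun α lam mu x = Real.exp (-(mu.len : ℝ) * x) *
      Wr (Fin.append (lam.laguerreBlock α) (mu.expLaguerreBlock α)) x := by
  unfold genLagFun
  congr 2
  funext i y
  refine Fin.addCases (fun j => ?_) (fun j => ?_) i <;> simp [laguerreBlock, expLaguerreBlock]

theorem contDiff_append_laguerreBlock (α : ℝ) (lam mu : PartitionSeq)
    (i : Fin (lam.len + mu.len)) :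
    ContDiff ℝ ∞ (Fin.append (lam.laguerreBlock α) (mu.expLaguerreBlock α) i) := by
  refine Fin.addCases (fun j => ?_) (fun j => ?_) i
  · rw [Fin.append_left]
    exact contDiff_laguerre α _
  · rw [Fin.append_right]
    exact Real.contDiff_exp.mul ((contDiff_laguerre α _).comp contDiff_neg)

theorem exp_mul_append_laguerreBlock_comp_neg (α : ℝ) (lam mu : PartitionSeq) :
    (fun i y => Real.exp y * Fin.append (lam.laguerreBlock α) (mu.expLaguerreBlock α) i (-y)) =
      Fin.append (lam.expLaguerreBlock α) (mu.laguerreBlock α) := by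
  funext i y
  refine Fin.addCases (fun j => ?_) (fun j => ?_) i
  · simp [laguerreBlock, expLaguerreBlock]
  · simp only [Fin.append_right, laguerreBlock, expLaguerreBlock, neg_neg]
    rw [← mul_assoc, ← Real.exp_add, add_neg_cancel, Real.exp_zero, one_mul]

/-- **Duality of the two partitions.** For every `α`, partitions `λ, μ` and every `x`,
`Ω_{λ,μ}^{(α)}(x) = (−1)^{r₁(r₁−1)/2 + r₂(r₂−1)/2} Ω_{μ,λ}^{(α)}(−x)`. -/
theorem genLag_duality (α : ℝ) (lam mu : PartitionSeq) (x : ℝ) :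
    genLagFun α lam mu x =
      (-1 : ℝ) ^ (lam.len * (lam.len - 1) / 2 + mu.len * (mu.len - 1) / 2) *
        genLagFun α mu lam (-x) := by
  have hexp : Real.exp (-(mu.len : ℝ) * x) * Real.exp x ^ (mu.len + lam.len) =
      Real.exp (-(lam.len : ℝ) * -x) := by
    rw [← Real.exp_nat_mul, ← Real.exp_add]
    push_cast
    ring_nf
  rw [genLagFun_eq_exp_mul_Wr_append, genLagFun_eq_exp_mul_Wr_append, Wr_append_comm,
    ← exp_mul_append_laguerreBlock_comp_neg,
    Wr_exp_mul_comp_neg (contDiff_append_laguerreBlock α mu lam),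
    ← neg_one_pow_mul_triangle_add lam.len mu.len, ← hexp]
  ring
end

section
/- Let r ≥ 1 and let x_1,…,x_r be pairwise distinct real numbers (x_i ≠ x_j for i ≠ j). Then Σ_{k=1}^{r} x_k · ∏_{j=1, j≠k}^{r} (x_j − x_k + 1)/(x_j − x_k) = Σ_{k=1}^{r} x_k − r(r−1)/2. -/
/-!
Since `(a + 1) / a = 1 + a⁻¹`, expanding each product over the subsets of its index set and
regrouping by `T = S ∪ {k}` turns the left side into
`∑_T ∑_{k ∈ T} x_k ∏_{j ∈ T \ {k}} (x_j - x_k)⁻¹`, a sum of divided differences of the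
polynomial `X`. By Lagrange interpolation such a divided difference is `x_k` for `T = {k}`,
`-1` for `|T| = 2` and `0` for `|T| ≥ 3`, and there are `r(r-1)/2` two-element subsets.
-/

open Finset

namespace Finset

variable {ι R : Type*} [DecidableEq ι] [CommSemiring R]

theorem sum_powerset_ite_mem_eq_sum_powerset_erase {s : Finset ι} {k : ι} (hk : k ∈ s)
    (F : Finset ι → R) :
    ∑ t ∈ s.powerset, (if k ∈ t then F (t.erase k) else 0) =
      ∑ u ∈ (s.erase k).powerset, F u := by
  conv_lhs => rw [← insert_erase hk]
  rw [sum_powerset_insert (notMem_erase k s)]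
  have hout : ∀ u ∈ (s.erase k).powerset, k ∉ u := fun u hu hku =>
    notMem_erase k s (mem_powerset.mp hu hku)
  rw [sum_eq_zero fun u hu => if_neg (hout u hu), zero_add]
  exact sum_congr rfl fun u hu => by rw [if_pos (mem_insert_self k u), erase_insert (hout u hu)]

theorem sum_mul_prod_erase_one_add (s : Finset ι) (f : ι → R) (g : ι → ι → R) :
    ∑ k ∈ s, f k * ∏ j ∈ s.erase k, (1 + g k j) =
      ∑ t ∈ s.powerset, ∑ k ∈ t, f k * ∏ j ∈ t.erase k, g k j := by
  calc ∑ k ∈ s, f k * ∏ j ∈ s.erase k, (1 + g k j)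
      = ∑ k ∈ s, ∑ t ∈ s.powerset,
          if k ∈ t then f k * ∏ j ∈ t.erase k, g k j else 0 := by
        refine sum_congr rfl fun k hk => ?_
        rw [prod_one_add, mul_sum]
        exact (sum_powerset_ite_mem_eq_sum_powerset_erase hk
          fun u => f k * ∏ j ∈ u, g k j).symm
    _ = ∑ t ∈ s.powerset, ∑ k ∈ t, f k * ∏ j ∈ t.erase k, g k j := by
        rw [sum_comm]
        refine sum_congr rfl fun t ht => ?_
        rw [sum_ite_mem, inter_eq_right.mpr (mem_powerset.mp ht)]

end Finset

namespace Lagrange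

variable {ι F : Type*} [DecidableEq ι] [Field F]

theorem sum_mul_prod_erase_inv_sub_of_two_le {s : Finset ι} {v : ι → F} (hvs : Set.InjOn v s)
    (hs : 2 ≤ #s) :
    ∑ k ∈ s, v k * ∏ j ∈ s.erase k, (v j - v k)⁻¹ = -if #s = 2 then 1 else 0 := by
  -- with the nodes `-v`, the weights `∏ (v j - v k)⁻¹` are those of Lagrange interpolation
  have hws : Set.InjOn (-v) s := neg_injective.comp_injOn hvs
  have hX : (Polynomial.X : Polynomial F).degree < #s := by
    rw [Polynomial.degree_X]; exact_mod_cast (by omega : 1 < #s)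
  have hcoeff := coeff_eq_sum hws hX
  simp only [Polynomial.coeff_X, Polynomial.eval_X, Pi.neg_apply, neg_sub_neg] at hcoeff
  calc ∑ k ∈ s, v k * ∏ j ∈ s.erase k, (v j - v k)⁻¹
      = -∑ k ∈ s, -v k / ∏ j ∈ s.erase k, (v j - v k) := by
        rw [← sum_neg_distrib]
        exact sum_congr rfl fun k _ => by rw [prod_inv_distrib]; ring
    _ = -if #s = 2 then 1 else 0 := by
        rw [← hcoeff]
        exact congrArg _ (if_congr (by omega) rfl rfl)

theorem sum_mul_prod_erase_inv_sub {s : Finset ι} {v : ι → F} (hvs : Set.InjOn v s) :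
    ∑ k ∈ s, v k * ∏ j ∈ s.erase k, (v j - v k)⁻¹ =
      (if #s = 1 then ∑ k ∈ s, v k else 0) - if #s = 2 then 1 else 0 := by
  obtain hs | hs | hs : #s = 0 ∨ #s = 1 ∨ 2 ≤ #s := by omega
  · simp [card_eq_zero.mp hs]
  · obtain ⟨a, rfl⟩ := card_eq_one.mp hs
    simp
  · rw [sum_mul_prod_erase_inv_sub_of_two_le hvs hs, if_neg (show #s ≠ 1 by omega), zero_sub]

end Lagrange

theorem sum_prod_identity_general (r : ℕ) (x : ℕ → ℝ)
    (hx : ∀ i j, i < r → j < r → i ≠ j → x i ≠ x j) :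
    ∑ k ∈ Finset.range r,
        x k * ∏ j ∈ (Finset.range r).erase k, (x j - x k + 1) / (x j - x k) =
      (∑ k ∈ Finset.range r, x k) - (r : ℝ) * ((r : ℝ) - 1) / 2 := by
  have hinj : Set.InjOn x (range r) := fun i hi j hj hij =>
    by_contra fun hne => hx i j (mem_range.mp hi) (mem_range.mp hj) hne hij
  calc ∑ k ∈ range r, x k * ∏ j ∈ (range r).erase k, (x j - x k + 1) / (x j - x k)
      = ∑ k ∈ range r, x k * ∏ j ∈ (range r).erase k, (1 + (x j - x k)⁻¹) := by
        refine sum_congr rfl fun k hk => congrArg _ (prod_congr rfl fun j hj => ?_)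
        have hjk : x j - x k ≠ 0 := sub_ne_zero.mpr <|
          hx j k (mem_range.mp (mem_of_mem_erase hj)) (mem_range.mp hk) (ne_of_mem_erase hj)
        rw [add_div, div_self hjk, one_div]
    _ = ∑ t ∈ (range r).powerset, ∑ k ∈ t, x k * ∏ j ∈ t.erase k, (x j - x k)⁻¹ :=
        sum_mul_prod_erase_one_add _ _ _
    _ = ∑ t ∈ (range r).powerset,
          ((if #t = 1 then ∑ k ∈ t, x k else 0) - if #t = 2 then 1 else 0) :=
        sum_congr rfl fun t ht =>
          Lagrange.sum_mul_prod_erase_inv_sub (hinj.mono (mem_powerset.mp ht))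
    _ = (∑ k ∈ range r, x k) - (r : ℝ) * ((r : ℝ) - 1) / 2 := by
        rw [sum_sub_distrib, ← sum_filter, ← sum_filter, ← powersetCard_eq_filter,
          ← powersetCard_eq_filter, powersetCard_one, sum_map, sum_const, card_powersetCard,
          card_range, ← Nat.cast_choose_two]
        simp

/-- **A rational-function identity.** For `r ≥ 1` pairwise distinct reals `x_1, …, x_r`,
`Σ_k x_k ∏_{j≠k} (x_j − x_k + 1)/(x_j − x_k) = Σ_k x_k − r(r−1)/2`. -/
theorem sum_prod_identity (r : ℕ) (hr : 1 ≤ r) (x : ℕ → ℝ)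
    (hx : ∀ i j, i < r → j < r → i ≠ j → x i ≠ x j) :
    ∑ k ∈ Finset.range r,
        x k * ∏ j ∈ (Finset.range r).erase k, (x j - x k + 1) / (x j - x k) =
      (∑ k ∈ Finset.range r, x k) - (r : ℝ) * ((r : ℝ) - 1) / 2 :=
  sum_prod_identity_general r x hx
end

section
/- Let r1, r2 be non-negative integers, r = r1+r2, let R_1,…,R_r be nonzero real polynomials, and let 0 ≤ l_1 < l_2 < ⋯ < l_r be integers. Define Q(x) = e^{−r2·x} · det M(x), where M(x) is the r×r matrix whose (i,j) entry is the l_i-th derivative at x of the function R_j for j = 1,…,r1, and of the function x ↦ e^x R_j(x) for j = r1+1,…,r. Then Q coincides with a polynomial of degree at most Σ_{i=1}^{r} deg R_i − Σ_{i=1}^{r1} l_i − r2(r2−1)/2 (in particular this holds if Q ≡ 0). -/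
/-!
Since `(e^x p)^{(l)} = e^x ∑_k C(l, k) p^{(k)}`, the function `e^{-r₂x} det M(x)` is the evaluation
of the determinant of a polynomial matrix. Write each of its columns as a sum of constant columns
times iterated derivatives `D^m R_j` and expand the determinant multilinearly: it becomes a sum of
terms `c · ∏_j D^{m_j} R_j` with constant `c`, each of degree at most `∑_j deg R_j - ∑_j m_j`.
A term survives only if its constant columns are pairwise distinct. For `j < r₁` the orders `m_j`
are then distinct values of `l`, whose sum is at least `l_1 + ⋯ + l_{r₁}`; for `j ≥ r₁` they are
distinct naturals, whose sum is at least `0 + 1 + ⋯ + (r₂ - 1)`.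
-/

open Polynomial Matrix

theorem Polynomial.iteratedDeriv_eval {𝕜 : Type*} [NontriviallyNormedField 𝕜] (n : ℕ) (p : 𝕜[X]) :
    iteratedDeriv n (fun x => p.eval x) = fun x => ((⇑derivative)^[n] p).eval x := by
  induction n with
  | zero => simp
  | succ n ih =>
    ext x
    rw [iteratedDeriv_succ, ih, Function.iterate_succ_apply', Polynomial.deriv]

theorem iteratedDeriv_exp_mul_eval (n : ℕ) (p : ℝ[X]) (x : ℝ) :
    iteratedDeriv n (fun y => Real.exp y * p.eval y) x =
      Real.exp x * ∑ k ∈ Finset.range (n + 1), n.choose k * ((⇑derivative)^[k] p).eval x := by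
  have hp : ContDiff ℝ n fun y => p.eval y := p.contDiff_aeval n
  simp_rw [mul_comm (Real.exp _)]
  rw [iteratedDeriv_fun_mul hp.contDiffAt Real.contDiff_exp.contDiffAt, Finset.sum_mul]
  simp_rw [Polynomial.iteratedDeriv_eval]
  simp [iteratedDeriv_eq_iterate, Real.iter_deriv_exp]

theorem Matrix.det_of_sum_mul_columns {n κ R : Type*} [Fintype n] [DecidableEq n] [CommRing R]
    (A : n → Finset κ) (c : n → κ → R) (w : n → κ → n → R) :
    det (of fun i j => ∑ k ∈ A j, c j k * w j k i) =
      ∑ f ∈ Fintype.piFinset A, (∏ j, c j (f j)) * det (of fun i j => w j (f j) i) := by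
  rw [← det_transpose]
  have hexpand := MultilinearMap.map_sum_finset
    (detRowAlternating (R := R) (n := n)).toMultilinearMap (fun j k => c j k • w j k) A
  convert hexpand using 2 with f
  · exact congrArg det (by ext j i; simp [Finset.sum_apply])
  · rw [← det_transpose, ← smul_eq_mul]
    exact (MultilinearMap.map_smul_univ detRowAlternating.toMultilinearMap _ _).symm

theorem Matrix.injective_transpose_of_det_ne_zero {n R : Type*} [Fintype n] [DecidableEq n]
    [CommRing R] {M : Matrix n n R} (h : M.det ≠ 0) : Function.Injective Mᵀ := by
  intro a b hab
  by_contra hne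
  exact h (det_zero_of_column_eq hne fun k => congrFun hab k)

theorem Polynomial.natDegree_prod_iterate_derivative_add_sum_le {ι R : Type*} [CommSemiring R]
    (s : Finset ι) (p : ι → R[X]) (m : ι → ℕ) (h : ∏ j ∈ s, (⇑derivative)^[m j] (p j) ≠ 0) :
    (∏ j ∈ s, (⇑derivative)^[m j] (p j)).natDegree + ∑ j ∈ s, m j ≤
      ∑ j ∈ s, (p j).natDegree := by
  have hle : ∀ j ∈ s, ((⇑derivative)^[m j] (p j)).natDegree + m j ≤ (p j).natDegree := by
    intro j hj
    have hm : m j ≤ (p j).natDegree := by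
      by_contra hlt
      exact h (Finset.prod_eq_zero hj (iterate_derivative_eq_zero (by omega)))
    have := natDegree_iterate_derivative (p j) (m j)
    omega
  calc _ ≤ ∑ j ∈ s, ((⇑derivative)^[m j] (p j)).natDegree + ∑ j ∈ s, m j := by
        gcongr; exact natDegree_prod_le _ _
    _ = ∑ j ∈ s, (((⇑derivative)^[m j] (p j)).natDegree + m j) := Finset.sum_add_distrib.symm
    _ ≤ _ := Finset.sum_le_sum hle

theorem Polynomial.sum_eq_zero_or_natDegree_add_le {ι R : Type*} [Semiring R] {s : Finset ι}
    {p : ι → R[X]} {b d : ℕ} (h : ∀ i ∈ s, p i ≠ 0 → (p i).natDegree + b ≤ d) :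
    ∑ i ∈ s, p i = 0 ∨ (∑ i ∈ s, p i).natDegree + b ≤ d := by
  refine or_iff_not_imp_left.2 fun hs => ?_
  obtain ⟨i, hi, hpi⟩ := Finset.exists_ne_zero_of_sum_ne_zero hs
  have hbd := h i hi hpi
  have hle : (∑ i ∈ s, p i).natDegree ≤ d - b := natDegree_sum_le_of_forall_le _ _ fun j hj => by
    by_cases hpj : p j = 0
    · simp [hpj]
    · have := h j hj hpj; omega
  omega

theorem Fin.val_le_of_strictMono {m : ℕ} {φ : Fin m → ℕ} (hφ : StrictMono φ) (a : Fin m) :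
    (a : ℕ) ≤ φ a := by
  obtain ⟨a, ha⟩ := a
  induction a with
  | zero => exact Nat.zero_le _
  | succ k ih => exact (ih (by omega)).trans_lt (hφ (Fin.mk_lt_mk.2 k.lt_succ_self))

theorem Finset.sum_range_le_sum_of_injective {m N : ℕ} {g : ℕ → ℕ}
    (hg : MonotoneOn g (Set.Iio N)) {e : Fin m → ℕ} (he : Function.Injective e)
    (hN : ∀ a, e a < N) :
    ∑ t ∈ Finset.range m, g t ≤ ∑ a, g (e a) := by
  set σ := Tuple.sort e
  have hsorted : StrictMono (e ∘ σ) :=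
    (Tuple.monotone_sort e).strictMono_of_injective (he.comp σ.injective)
  rw [← Fin.sum_univ_eq_sum_range, ← Equiv.sum_comp σ fun a => g (e a)]
  refine Finset.sum_le_sum fun a _ => ?_
  have ha := Fin.val_le_of_strictMono hsorted a
  exact hg (ha.trans_lt (hN _)) (hN _) ha

namespace GeneralizedWronskian

open Finset

variable (r1 r2 : ℕ) (R : ℕ → ℝ[X]) (l : ℕ → ℕ)

noncomputable def reducedMatrix : Matrix (Fin (r1 + r2)) (Fin (r1 + r2)) ℝ[X] :=
  of fun i j => if (j : ℕ) < r1 then (⇑derivative)^[l i] (R j)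
    else ∑ k ∈ range (l i + 1), (⇑derivative)^[k] (R j) * C ((l i).choose k : ℝ)

theorem eval_det_reducedMatrix (x : ℝ) :
    (reducedMatrix r1 r2 R l).det.eval x =
      Real.exp (-(r2 : ℝ) * x) *
        det (of fun i j : Fin (r1 + r2) =>
          if (j : ℕ) < r1 then iteratedDeriv (l i) (fun y => (R j).eval y) x
          else iteratedDeriv (l i) (fun y => Real.exp y * (R j).eval y) x) := by
  have hentries : (of fun i j : Fin (r1 + r2) =>
      if (j : ℕ) < r1 then iteratedDeriv (l i) (fun y => (R j).eval y) x
      else iteratedDeriv (l i) (fun y => Real.exp y * (R j).eval y) x) =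
      of fun i j : Fin (r1 + r2) => (if (j : ℕ) < r1 then 1 else Real.exp x) *
        (reducedMatrix r1 r2 R l).map (eval x) i j := by
    ext i j
    by_cases hj : (j : ℕ) < r1
    · simp [reducedMatrix, hj, Polynomial.iteratedDeriv_eval]
    · simp only [of_apply, if_neg hj, iteratedDeriv_exp_mul_eval]
      simp [reducedMatrix, hj, eval_finsetSum, mul_comm]
  have hprod : ∏ j : Fin (r1 + r2), (if (j : ℕ) < r1 then 1 else Real.exp x) =
      Real.exp x ^ r2 := by
    simp [Fin.prod_univ_add]
  rw [hentries, det_mul_row, hprod, ← coe_evalRingHom, RingHom.map_det, ← Real.exp_nat_mul,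
    ← mul_assoc, ← Real.exp_add]
  simp [RingHom.mapMatrix_apply]

/- By `reducedMatrix_eq_sum`, column `j` of `reducedMatrix` is
`∑_{k ∈ columnRange j} D^{columnOrder j k} R_j • columnCoeff j k`: for `j < r₁` the index `k` runs
over the rows and `columnCoeff j k` is the `k`-th unit vector, for `j ≥ r₁` it runs over the powers
of `D` in `(1 + D)^{l_i}`. -/
def columnOrder (j k : ℕ) : ℕ := if j < r1 then l k else k

def columnCoeff (j k i : ℕ) : ℝ := if j < r1 then (if i = k then 1 else 0) else (l i).choose k

def columnRange (K j : ℕ) : Finset ℕ := if j < r1 then range (r1 + r2) else range K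

theorem reducedMatrix_eq_sum (K : ℕ) (hK : ∀ i < r1 + r2, l i < K) :
    reducedMatrix r1 r2 R l = of fun i j : Fin (r1 + r2) => ∑ k ∈ columnRange r1 r2 K j,
      (⇑derivative)^[columnOrder r1 l j k] (R j) * C (columnCoeff r1 l j k i) := by
  ext i j : 1
  by_cases hj : (j : ℕ) < r1
  · simp [reducedMatrix, columnRange, columnOrder, columnCoeff, hj]
  · simp only [reducedMatrix, columnRange, columnOrder, columnCoeff, of_apply, if_neg hj]
    refine Finset.sum_subset (range_subset_range.2 (hK i i.isLt)) fun k _ hk => ?_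
    rw [Nat.choose_eq_zero_of_lt (by simpa using hk)]
    simp

theorem det_reducedMatrix_eq_sum (K : ℕ) (hK : ∀ i < r1 + r2, l i < K) :
    (reducedMatrix r1 r2 R l).det =
      ∑ f ∈ Fintype.piFinset fun j : Fin (r1 + r2) => columnRange r1 r2 K j,
        (∏ j : Fin (r1 + r2), (⇑derivative)^[columnOrder r1 l j (f j)] (R j)) *
          C (det (of fun i j : Fin (r1 + r2) => columnCoeff r1 l j (f j) i)) := by
  rw [reducedMatrix_eq_sum r1 r2 R l K hK, det_of_sum_mul_columns]
  refine Finset.sum_congr rfl fun f _ => ?_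
  rw [RingHom.map_det]
  rfl

theorem sum_le_sum_columnOrder (hl : MonotoneOn l (Set.Iio (r1 + r2))) (K : ℕ)
    {f : Fin (r1 + r2) → ℕ}
    (hf : f ∈ Fintype.piFinset fun j : Fin (r1 + r2) => columnRange r1 r2 K j)
    (hdet : det (of fun i j : Fin (r1 + r2) => columnCoeff r1 l j (f j) i) ≠ 0) :
    ∑ i ∈ range r1, l i + ∑ t ∈ range r2, t ≤ ∑ j : Fin (r1 + r2), columnOrder r1 l j (f j) := by
  have hcols := injective_transpose_of_det_ne_zero hdet
  have hrange : ∀ j : Fin (r1 + r2), f j ∈ columnRange r1 r2 K j := Fintype.mem_piFinset.1 hf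
  rw [Fin.sum_univ_add]
  simp only [columnOrder, Fin.val_castAdd, Fin.is_lt, if_true, Fin.val_natAdd,
    Nat.not_lt.2 (Nat.le_add_right r1 _), if_false]
  refine add_le_add (sum_range_le_sum_of_injective hl ?_ fun a => ?_)
    (sum_range_le_sum_of_injective (N := K) (monotone_id.monotoneOn _) ?_ fun b => ?_)
  · refine Function.Injective.of_comp
      (f := fun k (i : Fin (r1 + r2)) => if (i : ℕ) = k then (1 : ℝ) else 0)
      fun a b hab => Fin.castAdd_injective _ _ (hcols (funext fun i => ?_))
    simpa [columnCoeff] using congrFun hab i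
  · simpa [columnRange] using hrange (Fin.castAdd r2 a)
  · refine Function.Injective.of_comp (f := fun k (i : Fin (r1 + r2)) => ((l i).choose k : ℝ))
      fun a b hab => Fin.natAdd_injective _ _ (hcols (funext fun i => ?_))
    simpa [columnCoeff] using congrFun hab i
  · simpa [columnRange] using hrange (Fin.natAdd r1 b)

theorem det_reducedMatrix_eq_zero_or_natDegree_add_le (hl : MonotoneOn l (Set.Iio (r1 + r2))) :
    (reducedMatrix r1 r2 R l).det = 0 ∨
      (reducedMatrix r1 r2 R l).det.natDegree + (∑ i ∈ range r1, l i + ∑ t ∈ range r2, t) ≤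
        ∑ i ∈ range (r1 + r2), (R i).natDegree := by
  obtain ⟨K, hK⟩ : ∃ K, ∀ i < r1 + r2, l i < K :=
    ⟨(range (r1 + r2)).sup l + 1, fun i hi => Nat.lt_succ_of_le (le_sup (mem_range.2 hi))⟩
  rw [det_reducedMatrix_eq_sum r1 r2 R l K hK,
    ← Fin.sum_univ_eq_sum_range fun i => (R i).natDegree]
  refine Polynomial.sum_eq_zero_or_natDegree_add_le fun f hf hterm => ?_
  have hprod := left_ne_zero_of_mul hterm
  have hdet : det (of fun i j : Fin (r1 + r2) => columnCoeff r1 l j (f j) i) ≠ 0 :=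
    fun h => hterm (by rw [h, C_0, mul_zero])
  calc _ ≤ (∏ j : Fin (r1 + r2), (⇑derivative)^[columnOrder r1 l j (f j)] (R j)).natDegree +
        ∑ j : Fin (r1 + r2), columnOrder r1 l j (f j) :=
      add_le_add (natDegree_mul_C_le _ _) (sum_le_sum_columnOrder r1 r2 l hl K hf hdet)
    _ ≤ _ := natDegree_prod_iterate_derivative_add_sum_le _ _ _ hprod

end GeneralizedWronskian

open GeneralizedWronskian in
theorem generalized_wronskian_degree_bound_general (r1 r2 : ℕ) (R : ℕ → Polynomial ℝ)
    (l : ℕ → ℕ) (hl : ∀ i j, i < j → j < r1 + r2 → l i < l j) :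
    ∃ P : Polynomial ℝ,
      (∀ x : ℝ, P.eval x =
        Real.exp (-(r2 : ℝ) * x) *
          Matrix.det (Matrix.of fun i j : Fin (r1 + r2) =>
            if (j : ℕ) < r1 then
              iteratedDeriv (l (i : ℕ)) (fun y => (R (j : ℕ)).eval y) x
            else
              iteratedDeriv (l (i : ℕ)) (fun y => Real.exp y * (R (j : ℕ)).eval y) x)) ∧
      (P = 0 ∨
        (P.natDegree : ℤ) ≤
          (∑ i ∈ Finset.range (r1 + r2), ((R i).natDegree : ℤ)) -
            (∑ i ∈ Finset.range r1, (l i : ℤ)) - (r2 : ℤ) * ((r2 : ℤ) - 1) / 2) := by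
  have hmono : MonotoneOn l (Set.Iio (r1 + r2)) := fun i _ j hj hij =>
    hij.eq_or_lt.elim (fun h => h ▸ le_rfl) fun h => (hl i j h hj).le
  have hgauss : ((∑ t ∈ Finset.range r2, t : ℕ) : ℤ) = (r2 : ℤ) * ((r2 : ℤ) - 1) / 2 := by
    rw [Finset.sum_range_id, Int.natCast_div, Nat.cast_mul]
    rcases r2 with _ | m <;> simp
  refine ⟨(reducedMatrix r1 r2 R l).det, eval_det_reducedMatrix r1 r2 R l, ?_⟩
  refine (det_reducedMatrix_eq_zero_or_natDegree_add_le r1 r2 R l hmono).imp_right fun h => ?_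
  rw [← hgauss]
  zify at h
  push_cast
  linarith

/-- **Degree bound for a generalized Wronskian-type determinant.** For polynomials
`R_1, …, R_r` (`r = r₁ + r₂`) and integers `0 ≤ l_1 < ⋯ < l_r`, the function
`Q(x) = e^{−r₂x} det(M(x))`, whose `(i,j)` entry is the `l_i`-th derivative of `R_j`
(for `j ≤ r₁`) resp. of `e^x R_j` (for `j > r₁`), is a polynomial of degree at most
`Σ deg R_i − Σ_{i≤r₁} l_i − C(r₂,2)` (with the convention `deg 0 = −∞`). -/
theorem generalized_wronskian_degree_bound (r1 r2 : ℕ) (R : ℕ → Polynomial ℝ)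
    (hR0 : ∀ i, i < r1 + r2 → R i ≠ 0)
    (l : ℕ → ℕ) (hl : ∀ i j, i < j → j < r1 + r2 → l i < l j) :
    ∃ P : Polynomial ℝ,
      (∀ x : ℝ, P.eval x =
        Real.exp (-(r2 : ℝ) * x) *
          Matrix.det (Matrix.of fun i j : Fin (r1 + r2) =>
            if (j : ℕ) < r1 then
              iteratedDeriv (l (i : ℕ)) (fun y => (R (j : ℕ)).eval y) x
            else
              iteratedDeriv (l (i : ℕ)) (fun y => Real.exp y * (R (j : ℕ)).eval y) x)) ∧
      (P = 0 ∨
        (P.natDegree : ℤ) ≤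
          (∑ i ∈ Finset.range (r1 + r2), ((R i).natDegree : ℤ)) -
            (∑ i ∈ Finset.range r1, (l i : ℤ)) - (r2 : ℤ) * ((r2 : ℤ) - 1) / 2) :=
  generalized_wronskian_degree_bound_general r1 r2 R l hl
end
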